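/- arXiv:2601.00455 — 4 statements merged into one kernel-verified Lean document; each statement's English description precedes it below -/
import Mathlib

section
/- Let p : ℝⁿ → ℝ be a polynomial of degree at most K. Then p is L-Lipschitz on [−1,1]ⁿ with respect to the ℓ∞ norm, where L = (n+1)^((K+1)/2) · K · ‖p‖_co, and moreover |p(x)| ≤ (n+1)^(K/2) · ‖p‖_co for all x ∈ [−1,1]ⁿ. -/
open MvPolynomial

-- card bound
lemma support_card_le {n K : ℕ} (p : MvPolynomial (Fin n) ℝ) (hdeg : p.totalDegree ≤ K) :
    p.support.card ≤ (n + 1) ^ K := by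
  classical
  set F : (Fin n →₀ ℕ) → (Fin K → Option (Fin n)) :=
    fun d k => (Multiset.sort d.toMultiset (· ≤ ·))[(k : ℕ)]? with hF
  have hlen : ∀ d ∈ p.support, (Multiset.sort d.toMultiset (· ≤ ·)).length ≤ K := by
    intro d hd
    rw [Multiset.length_sort, Finsupp.card_toMultiset]
    exact le_trans (MvPolynomial.le_totalDegree hd) hdeg
  have hinj : Set.InjOn F p.support := by
    intro d₁ h₁ d₂ h₂ heq
    have hl : Multiset.sort d₁.toMultiset (· ≤ ·) = Multiset.sort d₂.toMultiset (· ≤ ·) := by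
      apply List.ext_getElem?
      intro m
      by_cases hm : m < K
      · exact congrFun heq ⟨m, hm⟩
      · rw [List.getElem?_eq_none (le_trans (hlen d₁ h₁) (not_lt.1 hm)),
          List.getElem?_eq_none (le_trans (hlen d₂ h₂) (not_lt.1 hm))]
    have hms : d₁.toMultiset = d₂.toMultiset := by
      rw [← Multiset.sort_eq d₁.toMultiset (· ≤ ·), ← Multiset.sort_eq d₂.toMultiset (· ≤ ·), hl]
    classical
    exact Finsupp.ext fun a => by
      rw [← Finsupp.count_toMultiset, ← Finsupp.count_toMultiset, hms]
  calc p.support.card ≤ (Finset.univ : Finset (Fin K → Option (Fin n))).card :=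
        Finset.card_le_card_of_injOn F (fun a _ => Finset.mem_univ _) hinj
    _ = (n + 1) ^ K := by simp [Fintype.card_option]

-- Cauchy-Schwarz
lemma sum_abs_le_sqrt {ι : Type*} (s : Finset ι) (f : ι → ℝ) :
    ∑ i ∈ s, |f i| ≤ Real.sqrt s.card * Real.sqrt (∑ i ∈ s, f i ^ 2) := by
  have h := Finset.sum_mul_sq_le_sq_mul_sq s (fun _ => (1:ℝ)) (fun i => |f i|)
  simp only [one_mul, one_pow, sq_abs] at h
  have h0 : 0 ≤ ∑ i ∈ s, |f i| := Finset.sum_nonneg fun i _ => abs_nonneg _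
  calc ∑ i ∈ s, |f i| = Real.sqrt ((∑ i ∈ s, |f i|) ^ 2) := (Real.sqrt_sq h0).symm
    _ ≤ Real.sqrt ((∑ _i ∈ s, (1:ℝ)) * ∑ i ∈ s, f i ^ 2) := Real.sqrt_le_sqrt h
    _ = Real.sqrt s.card * Real.sqrt (∑ i ∈ s, f i ^ 2) := by
        rw [Real.sqrt_mul (by positivity)]; simp

-- product difference bound
lemma abs_prod_sub_prod_le {ι : Type*} (s : Finset ι) (a b : ι → ℝ) :
    (∀ i ∈ s, |a i| ≤ 1) → (∀ i ∈ s, |b i| ≤ 1) →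
    |(∏ i ∈ s, a i) - ∏ i ∈ s, b i| ≤ ∑ i ∈ s, |a i - b i| := by
  classical
  induction s using Finset.induction_on with
  | empty => simp
  | @insert i s hi ih =>
    intro ha hb
    rw [Finset.prod_insert hi, Finset.prod_insert hi, Finset.sum_insert hi]
    have hPa : |∏ j ∈ s, a j| ≤ 1 := by
      rw [Finset.abs_prod]
      exact Finset.prod_le_one (fun j _ => abs_nonneg _)
        (fun j hj => ha j (Finset.mem_insert_of_mem hj))
    have hbi : |b i| ≤ 1 := hb i (Finset.mem_insert_self i s)
    have ih' := ih (fun j hj => ha j (Finset.mem_insert_of_mem hj))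
      (fun j hj => hb j (Finset.mem_insert_of_mem hj))
    have key : a i * ∏ j ∈ s, a j - b i * ∏ j ∈ s, b j
        = (a i - b i) * ∏ j ∈ s, a j + b i * ((∏ j ∈ s, a j) - ∏ j ∈ s, b j) := by ring
    rw [key]
    calc |(a i - b i) * ∏ j ∈ s, a j + b i * ((∏ j ∈ s, a j) - ∏ j ∈ s, b j)|
        ≤ |(a i - b i) * ∏ j ∈ s, a j| + |b i * ((∏ j ∈ s, a j) - ∏ j ∈ s, b j)| := abs_add_le _ _
      _ = |a i - b i| * |∏ j ∈ s, a j| + |b i| * |(∏ j ∈ s, a j) - ∏ j ∈ s, b j| := by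
          rw [abs_mul, abs_mul]
      _ ≤ |a i - b i| * 1 + 1 * ∑ j ∈ s, |a j - b j| := by
          have hs : 0 ≤ ∑ j ∈ s, |a j - b j| := Finset.sum_nonneg fun j _ => abs_nonneg _
          have := mul_le_mul ih' (le_refl (1:ℝ)) zero_le_one hs
          nlinarith [mul_le_mul (le_refl |a i - b i|) hPa (abs_nonneg _) (abs_nonneg _),
            mul_le_mul hbi ih' ((abs_nonneg _)) zero_le_one,
            abs_nonneg (a i - b i), abs_nonneg (b i),
            abs_nonneg ((∏ j ∈ s, a j) - ∏ j ∈ s, b j)]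
      _ = |a i - b i| + ∑ j ∈ s, |a j - b j| := by ring

lemma abs_pow_sub_pow_le_one (a b : ℝ) (k : ℕ) (ha : |a| ≤ 1) (hb : |b| ≤ 1) :
    |a ^ k - b ^ k| ≤ k * |a - b| := by
  have h := abs_prod_sub_prod_le (Finset.range k) (fun _ => a) (fun _ => b)
    (fun _ _ => ha) (fun _ _ => hb)
  simpa [Finset.prod_const, Finset.sum_const, Finset.card_range, mul_comm] using h

noncomputable def coeffNorm {n : ℕ} (p : MvPolynomial (Fin n) ℝ) : ℝ :=
  Real.sqrt (∑ m ∈ p.support, (coeff m p) ^ 2)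

theorem stmt2 {n K : ℕ} (p : MvPolynomial (Fin n) ℝ) (hdeg : p.totalDegree ≤ K) :
    (∀ x y : Fin n → ℝ, (∀ i, |x i| ≤ 1) → (∀ i, |y i| ≤ 1) →
      |eval x p - eval y p| ≤
        ((n : ℝ) + 1) ^ (((K : ℝ) + 1) / 2) * K * coeffNorm p * ‖x - y‖)
    ∧ (∀ x : Fin n → ℝ, (∀ i, |x i| ≤ 1) →
      |eval x p| ≤ ((n : ℝ) + 1) ^ ((K : ℝ) / 2) * coeffNorm p) := by
  classical
  have hC : 0 ≤ coeffNorm p := Real.sqrt_nonneg _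
  have hA : ∑ d ∈ p.support, |coeff d p| ≤ ((n : ℝ) + 1) ^ ((K : ℝ) / 2) * coeffNorm p := by
    have h1 := sum_abs_le_sqrt p.support (fun d => coeff d p)
    have h2 : Real.sqrt p.support.card ≤ ((n:ℝ)+1) ^ ((K:ℝ)/2) := by
      have hc : (p.support.card : ℝ) ≤ ((n:ℝ)+1)^K := by
        have h := support_card_le p hdeg
        calc (p.support.card:ℝ) ≤ (((n+1)^K : ℕ) : ℝ) := by exact_mod_cast h
          _ = ((n:ℝ)+1)^K := by push_cast; ring
      calc Real.sqrt p.support.card ≤ Real.sqrt (((n:ℝ)+1)^K) := Real.sqrt_le_sqrt hc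
        _ = ((n:ℝ)+1) ^ ((K:ℝ)/2) := by
            rw [Real.sqrt_eq_rpow, ← Real.rpow_natCast ((n:ℝ)+1) K,
              ← Real.rpow_mul (by positivity)]
            congr 1; ring
    calc ∑ d ∈ p.support, |coeff d p|
        ≤ Real.sqrt p.support.card * Real.sqrt (∑ d ∈ p.support, (coeff d p)^2) := h1
      _ ≤ ((n:ℝ)+1) ^ ((K:ℝ)/2) * coeffNorm p :=
          mul_le_mul_of_nonneg_right h2 (Real.sqrt_nonneg _)
  have hpow1 : ∀ (x : Fin n → ℝ), (∀ i, |x i| ≤ 1) → ∀ d : Fin n →₀ ℕ,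
      |∏ i ∈ d.support, x i ^ d i| ≤ 1 := by
    intro x hx d
    rw [Finset.abs_prod]
    exact Finset.prod_le_one (fun i _ => abs_nonneg _)
      (fun i _ => by rw [abs_pow]; exact pow_le_one₀ (abs_nonneg _) (hx i))
  constructor
  · intro x y hx hy
    have hxy : 0 ≤ ‖x - y‖ := norm_nonneg _
    have hdiff : ∀ d ∈ p.support,
        |(∏ i ∈ d.support, x i ^ d i) - ∏ i ∈ d.support, y i ^ d i| ≤ K * ‖x - y‖ := by
      intro d hd
      have h1 := abs_prod_sub_prod_le d.support (fun i => x i ^ d i) (fun i => y i ^ d i)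
        (fun i _ => by rw [abs_pow]; exact pow_le_one₀ (abs_nonneg _) (hx i))
        (fun i _ => by rw [abs_pow]; exact pow_le_one₀ (abs_nonneg _) (hy i))
      have h2 : ∑ i ∈ d.support, |x i ^ d i - y i ^ d i|
          ≤ ∑ i ∈ d.support, (d i : ℝ) * ‖x - y‖ := by
        apply Finset.sum_le_sum
        intro i _
        calc |x i ^ d i - y i ^ d i| ≤ (d i) * |x i - y i| :=
              abs_pow_sub_pow_le_one _ _ _ (hx i) (hy i)
          _ ≤ (d i) * ‖x - y‖ := by
              apply mul_le_mul_of_nonneg_left _ (Nat.cast_nonneg _)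
              simpa using norm_le_pi_norm (x - y) i
      have h3 : ∑ i ∈ d.support, ((d i : ℝ)) * ‖x - y‖ ≤ K * ‖x - y‖ := by
        rw [← Finset.sum_mul]
        apply mul_le_mul_of_nonneg_right _ hxy
        have hdK : (d.sum fun _ e => e) ≤ K := le_trans (MvPolynomial.le_totalDegree hd) hdeg
        calc ∑ i ∈ d.support, (d i : ℝ) = (((d.sum fun _ e => e) : ℕ) : ℝ) := by
              rw [Finsupp.sum]; rw [Nat.cast_sum]
          _ ≤ (K : ℝ) := by exact_mod_cast hdK
      linarith [h1.trans h2]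
    rw [MvPolynomial.eval_eq, MvPolynomial.eval_eq, ← Finset.sum_sub_distrib]
    calc |∑ d ∈ p.support, (coeff d p * ∏ i ∈ d.support, x i ^ d i
            - coeff d p * ∏ i ∈ d.support, y i ^ d i)|
        ≤ ∑ d ∈ p.support, |coeff d p * ∏ i ∈ d.support, x i ^ d i
            - coeff d p * ∏ i ∈ d.support, y i ^ d i| := Finset.abs_sum_le_sum_abs _ _
      _ ≤ ∑ d ∈ p.support, |coeff d p| * (K * ‖x - y‖) := by
          apply Finset.sum_le_sum
          intro d hd
          rw [← mul_sub, abs_mul]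
          exact mul_le_mul_of_nonneg_left (hdiff d hd) (abs_nonneg _)
      _ = (∑ d ∈ p.support, |coeff d p|) * (K * ‖x - y‖) := by rw [Finset.sum_mul]
      _ ≤ (((n:ℝ)+1) ^ ((K:ℝ)/2) * coeffNorm p) * (K * ‖x - y‖) :=
          mul_le_mul_of_nonneg_right hA (by positivity)
      _ ≤ ((n : ℝ) + 1) ^ (((K : ℝ) + 1) / 2) * K * coeffNorm p * ‖x - y‖ := by
          have hexp : ((n:ℝ)+1) ^ ((K:ℝ)/2) ≤ ((n:ℝ)+1) ^ (((K:ℝ)+1)/2) :=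
            Real.rpow_le_rpow_of_exponent_le (by push_cast; linarith [Nat.cast_nonneg (α := ℝ) n])
              (by linarith)
          have h := mul_le_mul_of_nonneg_right
            (mul_le_mul_of_nonneg_right hexp hC) (by positivity : (0:ℝ) ≤ K * ‖x - y‖)
          nlinarith [h]
  · intro x hx
    rw [MvPolynomial.eval_eq]
    calc |∑ d ∈ p.support, coeff d p * ∏ i ∈ d.support, x i ^ d i|
        ≤ ∑ d ∈ p.support, |coeff d p * ∏ i ∈ d.support, x i ^ d i| :=
          Finset.abs_sum_le_sum_abs _ _
      _ ≤ ∑ d ∈ p.support, |coeff d p| := by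
          apply Finset.sum_le_sum
          intro d hd
          rw [abs_mul]
          have h := hpow1 x hx d
          nlinarith [abs_nonneg (coeff d p)]
      _ ≤ _ := hA
end

section
/- Let ℓ : ℝ → [0,∞] be a convex loss with ℓ(1) = 0, and let q̃(x) = 1.5x − 0.5x³. Fix B ≥ 1, 0 < ξ ≤ 1, and let γ = (1/32)·min(1/B, ξ). Then for every x with 1/(4B) ≤ x ≤ 1, we have ℓ(q̃(x) − γ) ≤ e^{−γ} ℓ(x), provided that ℓ is nonincreasing on [0,1] and ℓ(x) = ℓ(min(x, 1−ξ/2)) for x in this range. -/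
/-!
Put `x' = min x (1 - ξ/2)`, so that `ℓ x = ℓ x'`. The push `q̃(x') - x' = x'(1 - x'²)/2` is at least
`2γ`: near `1` because `1 - x' ≥ ξ/2`, and below `1/2` because `x' ≥ 1/(4B)`. As `q̃` is increasing
on `[0, 1]`, `x' + γ ≤ q̃(x) - γ ≤ 1`, so monotonicity of `ℓ` reduces the claim to `ℓ(x' + γ)`.
Convexity of `ℓ` on the chord from `x'` to `1`, where `ℓ` vanishes, bounds this by
`(1 - γ/(1 - x')) ℓ(x') ≤ (1 - γ) ℓ(x') ≤ e^{-γ} ℓ(x')`.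
-/

open Set

def cubicPush (x : ℝ) : ℝ := 1.5 * x - 0.5 * x ^ 3

lemma cubicPush_sub_self (x : ℝ) : cubicPush x - x = x * (1 - x ^ 2) / 2 := by
  unfold cubicPush; ring

lemma cubicPush_le_one {x : ℝ} (hx : -2 ≤ x) : cubicPush x ≤ 1 := by
  have h : 1 - cubicPush x = (x - 1) ^ 2 * (x + 2) / 2 := by unfold cubicPush; ring
  nlinarith [mul_nonneg (sq_nonneg (x - 1)) (by linarith : (0 : ℝ) ≤ x + 2)]

lemma cubicPush_monotoneOn : MonotoneOn cubicPush (Icc 0 1) := by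
  rintro y ⟨hy0, hy1⟩ x ⟨hx0, hx1⟩ hyx
  have h : cubicPush x - cubicPush y = (x - y) * (3 - x ^ 2 - x * y - y ^ 2) / 2 := by
    unfold cubicPush; ring
  have hfactor : 0 ≤ 3 - x ^ 2 - x * y - y ^ 2 := by nlinarith [mul_le_one₀ hx1 hy0 hy1]
  nlinarith [mul_nonneg (sub_nonneg.mpr hyx) hfactor]

lemma min_one_div_div_sixteen_le_cubicPush_sub_self {B ξ x : ℝ} (hB : 0 < B) (hξ : 0 ≤ ξ)
    (hxB : 1 / (4 * B) ≤ x) (hxξ : x ≤ 1 - ξ / 2) :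
    min (1 / B) ξ / 16 ≤ cubicPush x - x := by
  rw [cubicPush_sub_self]
  have hx0 : 0 < x := lt_of_lt_of_le (by positivity) hxB
  rcases le_or_gt (1 / 2 : ℝ) x with hx | hx
  · have hpush : ξ / 8 ≤ x * (1 - x ^ 2) / 2 := by
      nlinarith [mul_nonneg (mul_nonneg (by linarith : (0 : ℝ) ≤ x - 1 / 2)
        (by linarith : (0 : ℝ) ≤ 1 - ξ / 2 - x)) (by linarith : (0 : ℝ) ≤ 1 + x)]
    linarith [min_le_right (1 / B) ξ]
  · have hsq : 3 / 4 ≤ 1 - x ^ 2 := by nlinarith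
    have hpush : 1 / (4 * B) * (3 / 4) / 2 ≤ x * (1 - x ^ 2) / 2 := by
      gcongr
    have hB' : 1 / B / 16 ≤ 1 / (4 * B) * (3 / 4) / 2 := by
      field_simp; norm_num
    linarith [min_le_left (1 / B) ξ]

lemma ConvexOn.apply_add_le_of_apply_eq_zero {s : Set ℝ} {f : ℝ → ℝ} (hf : ConvexOn ℝ s f)
    {y z g : ℝ} (hy : y ∈ s) (hz : z ∈ s) (hfz : f z = 0) (hyz : y < z) (hg0 : 0 ≤ g)
    (hg : g ≤ z - y) :
    f (y + g) ≤ (1 - g / (z - y)) * f y := by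
  have hd : 0 < z - y := sub_pos.mpr hyz
  have ht1 : g / (z - y) ≤ 1 := (div_le_one hd).mpr hg
  have hcomb : (1 - g / (z - y)) * y + g / (z - y) * z = y + g := by
    field_simp; ring
  have h := hf.2 hy hz (sub_nonneg.mpr ht1) (by positivity) (sub_add_cancel 1 _)
  simpa only [smul_eq_mul, hcomb, hfz, mul_zero, add_zero] using h

lemma one_sub_div_le_exp_neg {γ y : ℝ} (hγ : 0 ≤ γ) (hy0 : 0 ≤ y) (hy1 : y < 1) :
    1 - γ / (1 - y) ≤ Real.exp (-γ) := by
  have hγle : γ ≤ γ / (1 - y) := le_div_self hγ (by linarith) (by linarith)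
  linarith [Real.add_one_le_exp (-γ)]

theorem stmt5_general (ℓ : ℝ → ℝ)
    (hconv : ConvexOn ℝ (Set.Icc (0 : ℝ) 1) ℓ)
    (hone : ℓ 1 = 0)
    (hmono : AntitoneOn ℓ (Set.Icc (0 : ℝ) 1))
    (B ξ γ : ℝ) (hB : 1 ≤ B) (hξ0 : 0 < ξ) (hξ1 : ξ ≤ 1)
    (hγ : γ = 1 / 32 * min (1 / B) ξ)
    (htrunc : ∀ x, 1 / (4 * B) ≤ x → x ≤ 1 → ℓ x = ℓ (min x (1 - ξ / 2))) :
    ∀ x, 1 / (4 * B) ≤ x → x ≤ 1 →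
      ℓ (1.5 * x - 0.5 * x ^ 3 - γ) ≤ Real.exp (-γ) * ℓ x := by
  intro x hxB hx1
  change ℓ (cubicPush x - γ) ≤ _
  have hB0 : 0 < B := by linarith
  have hxB0 : 0 < 1 / (4 * B) := by positivity
  have hxB4 : 1 / (4 * B) ≤ 1 / 4 := by gcongr; linarith
  have hγ0 : 0 < γ := hγ ▸ by positivity
  have hγξ : γ ≤ ξ / 32 := by linarith [min_le_right (1 / B) ξ]
  set x' := min x (1 - ξ / 2)
  have hx'B : 1 / (4 * B) ≤ x' := le_min hxB (by linarith)
  have hx'ξ : x' ≤ 1 - ξ / 2 := min_le_right _ _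
  have hx'0 : 0 ≤ x' := by linarith
  have hpush := min_one_div_div_sixteen_le_cubicPush_sub_self hB0 hξ0.le hx'B hx'ξ
  have hqx : cubicPush x' ≤ cubicPush x :=
    cubicPush_monotoneOn ⟨hx'0, by linarith⟩ ⟨by linarith, hx1⟩ (min_le_left _ _)
  have hq1 : cubicPush x ≤ 1 := cubicPush_le_one (by linarith)
  have hmem : x' ∈ Icc (0 : ℝ) 1 := ⟨hx'0, by linarith⟩
  have hone_mem : (1 : ℝ) ∈ Icc (0 : ℝ) 1 := right_mem_Icc.mpr zero_le_one
  calc ℓ (cubicPush x - γ) ≤ ℓ (x' + γ) :=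
        hmono ⟨by linarith, by linarith⟩ ⟨by linarith, by linarith⟩ (by linarith)
    _ ≤ (1 - γ / (1 - x')) * ℓ x' :=
      hconv.apply_add_le_of_apply_eq_zero hmem hone_mem hone (by linarith) hγ0.le (by linarith)
    _ ≤ Real.exp (-γ) * ℓ x' :=
      mul_le_mul_of_nonneg_right (one_sub_div_le_exp_neg hγ0.le hx'0 (by linarith))
        (hone ▸ hmono hmem hone_mem hmem.2)
    _ = Real.exp (-γ) * ℓ x := by rw [htrunc x hxB hx1]

theorem stmt5 (ℓ : ℝ → ℝ) (hnn : ∀ z, 0 ≤ ℓ z)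
    (hconv : ConvexOn ℝ (Set.Icc (0 : ℝ) 1) ℓ)
    (hone : ℓ 1 = 0)
    (hmono : AntitoneOn ℓ (Set.Icc (0 : ℝ) 1))
    (B ξ γ : ℝ) (hB : 1 ≤ B) (hξ0 : 0 < ξ) (hξ1 : ξ ≤ 1)
    (hγ : γ = 1 / 32 * min (1 / B) ξ)
    (htrunc : ∀ x, 1 / (4 * B) ≤ x → x ≤ 1 → ℓ x = ℓ (min x (1 - ξ / 2))) :
    ∀ x, 1 / (4 * B) ≤ x → x ≤ 1 →
      ℓ (1.5 * x - 0.5 * x ^ 3 - γ) ≤ Real.exp (-γ) * ℓ x :=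
  stmt5_general ℓ hconv hone hmono B ξ γ hB hξ0 hξ1 hγ htrunc
end

section
/- Every Boolean function f : {±1}^K → {±1} depending on (all of) its K coordinates is a (K, 2, 3, ξ)-PTF with ξ = 1/(K·2^{(K+2)/2}), witnessed by twice its multilinear extension. -/
/-- Fourier coefficient `a_A` of a function on the Boolean cube `{±1}^K`. -/
noncomputable def boolFourierCoeff (K : ℕ) (f : (Fin K → ℝ) → ℝ) (A : Finset (Fin K)) : ℝ :=
  (1 / 2 ^ K) * ∑ s : Fin K → Bool,
    f (fun i => if s i then 1 else -1) * ∏ i ∈ A, (if s i then (1 : ℝ) else -1)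

/-- The multilinear (Fourier) extension of a Boolean function. -/
noncomputable def mlExt (K : ℕ) (f : (Fin K → ℝ) → ℝ) (x : Fin K → ℝ) : ℝ :=
  ∑ A : Finset (Fin K), boolFourierCoeff K f A * ∏ i ∈ A, x i

lemma prod_sub_prod_abs_le {ι : Type*} [DecidableEq ι] (A : Finset ι) (x u : ι → ℝ)
    (hx : ∀ i, |x i| ≤ 1) (hu : ∀ i, |u i| ≤ 1) :
    |(∏ i ∈ A, x i) - ∏ i ∈ A, u i| ≤ ∑ i ∈ A, |x i - u i| := by
  induction A using Finset.induction with
  | empty => simp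
  | @insert a A ha ih =>
    rw [Finset.prod_insert ha, Finset.prod_insert ha, Finset.sum_insert ha]
    have key : x a * ∏ i ∈ A, x i - u a * ∏ i ∈ A, u i
        = x a * ((∏ i ∈ A, x i) - ∏ i ∈ A, u i) + (x a - u a) * ∏ i ∈ A, u i := by ring
    rw [key]
    have h1 : |x a * ((∏ i ∈ A, x i) - ∏ i ∈ A, u i)| ≤ ∑ i ∈ A, |x i - u i| := by
      rw [abs_mul]
      calc |x a| * |(∏ i ∈ A, x i) - ∏ i ∈ A, u i| ≤ 1 * |(∏ i ∈ A, x i) - ∏ i ∈ A, u i| :=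
            mul_le_mul_of_nonneg_right (hx a) (abs_nonneg _)
        _ = |(∏ i ∈ A, x i) - ∏ i ∈ A, u i| := one_mul _
        _ ≤ _ := ih
    have h2 : |(x a - u a) * ∏ i ∈ A, u i| ≤ |x a - u a| := by
      rw [abs_mul, Finset.abs_prod]
      calc |x a - u a| * ∏ i ∈ A, |u i| ≤ |x a - u a| * 1 := by
            apply mul_le_mul_of_nonneg_left _ (abs_nonneg _)
            exact Finset.prod_le_one (fun i _ => abs_nonneg _) (fun i _ => hu i)
        _ = _ := mul_one _
    calc |x a * ((∏ i ∈ A, x i) - ∏ i ∈ A, u i) + (x a - u a) * ∏ i ∈ A, u i|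
        ≤ |x a * ((∏ i ∈ A, x i) - ∏ i ∈ A, u i)| + |(x a - u a) * ∏ i ∈ A, u i| := abs_add_le _ _
      _ ≤ |x a - u a| + ∑ i ∈ A, |x i - u i| := by linarith
  
lemma orth (K : ℕ) (s t : Fin K → Bool) :
    ∑ A : Finset (Fin K), (∏ i ∈ A, (if s i then (1:ℝ) else -1)) * ∏ i ∈ A, (if t i then (1:ℝ) else -1)
      = if s = t then (2:ℝ)^K else 0 := by
  have h1 : ∀ A : Finset (Fin K),
      (∏ i ∈ A, (if s i then (1:ℝ) else -1)) * ∏ i ∈ A, (if t i then (1:ℝ) else -1)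
        = ∏ i ∈ A, ((if s i then (1:ℝ) else -1) * (if t i then (1:ℝ) else -1)) := by
    intro A; rw [Finset.prod_mul_distrib]
  simp_rw [h1]
  have h2 := Finset.prod_add (fun i => (if s i then (1:ℝ) else -1) * (if t i then (1:ℝ) else -1))
    (fun _ => (1:ℝ)) Finset.univ
  simp only [Finset.prod_const_one, mul_one, Finset.powerset_univ] at h2
  rw [← h2]
  by_cases hst : s = t
  · subst hst
    simp only [if_pos rfl]
    have : ∀ i : Fin K, ((if s i = true then (1:ℝ) else -1) * (if s i = true then (1:ℝ) else -1)) + 1 = 2 := by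
      intro i; by_cases h : s i = true <;> simp [h] <;> norm_num
    rw [Finset.prod_congr rfl (fun i _ => this i)]
    simp
  · rw [if_neg hst]
    obtain ⟨j, hj⟩ : ∃ j, s j ≠ t j := by
      by_contra h; push_neg at h; exact hst (funext h)
    apply Finset.prod_eq_zero (Finset.mem_univ j)
    rcases Bool.eq_false_or_eq_true (s j) with h | h <;>
      rcases Bool.eq_false_or_eq_true (t j) with h' | h' <;> simp_all

lemma inversion (K : ℕ) (f : (Fin K → ℝ) → ℝ) (s : Fin K → Bool) :
    mlExt K f (fun i => if s i then (1:ℝ) else -1) = f (fun i => if s i then 1 else -1) := by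
  unfold mlExt boolFourierCoeff
  have h : ∀ A : Finset (Fin K),
      ((1 / 2 ^ K : ℝ) * ∑ t : Fin K → Bool,
        f (fun i => if t i then 1 else -1) * ∏ i ∈ A, (if t i then (1:ℝ) else -1)) *
        ∏ i ∈ A, (if s i then (1:ℝ) else -1)
      = (1 / 2 ^ K : ℝ) * ∑ t : Fin K → Bool,
        f (fun i => if t i then 1 else -1) *
          ((∏ i ∈ A, (if t i then (1:ℝ) else -1)) * ∏ i ∈ A, (if s i then (1:ℝ) else -1)) := by
    intro A
    rw [mul_assoc, Finset.sum_mul]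
    congr 1
    exact Finset.sum_congr rfl fun t _ => by ring
  simp_rw [h]
  rw [← Finset.mul_sum, Finset.sum_comm]
  have h2 : ∀ t : Fin K → Bool,
      ∑ A : Finset (Fin K), f (fun i => if t i then 1 else -1) *
        ((∏ i ∈ A, (if t i then (1:ℝ) else -1)) * ∏ i ∈ A, (if s i then (1:ℝ) else -1))
      = f (fun i => if t i then 1 else -1) * (if t = s then (2:ℝ)^K else 0) := by
    intro t
    rw [← Finset.mul_sum, orth K t s]
  simp_rw [h2, mul_ite, mul_zero]
  rw [Finset.sum_ite_eq' Finset.univ s]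
  simp only [Finset.mem_univ, if_pos]
  field_simp

lemma parseval (K : ℕ) (f : (Fin K → ℝ) → ℝ)
    (hbool : ∀ s : Fin K → Bool,
      f (fun i => if s i then 1 else -1) = 1 ∨ f (fun i => if s i then 1 else -1) = -1) :
    ∑ A : Finset (Fin K), (boolFourierCoeff K f A) ^ 2 = 1 := by
  have h : ∀ A : Finset (Fin K), (boolFourierCoeff K f A) ^ 2
      = (1 / 2 ^ K : ℝ)^2 * ∑ t : Fin K → Bool, ∑ r : Fin K → Bool,
          (f (fun i => if t i then 1 else -1) * f (fun i => if r i then 1 else -1)) *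
            ((∏ i ∈ A, (if t i then (1:ℝ) else -1)) * ∏ i ∈ A, (if r i then (1:ℝ) else -1)) := by
    intro A
    unfold boolFourierCoeff
    rw [mul_pow]
    congr 1
    rw [sq, Finset.sum_mul_sum]
    refine Finset.sum_congr rfl fun t _ => Finset.sum_congr rfl fun r _ => by ring
  calc ∑ A : Finset (Fin K), (boolFourierCoeff K f A) ^ 2
      = (1 / 2 ^ K : ℝ)^2 * ∑ A : Finset (Fin K), ∑ t : Fin K → Bool, ∑ r : Fin K → Bool,
          (f (fun i => if t i then 1 else -1) * f (fun i => if r i then 1 else -1)) *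
            ((∏ i ∈ A, (if t i then (1:ℝ) else -1)) * ∏ i ∈ A, (if r i then (1:ℝ) else -1)) := by
        rw [Finset.mul_sum]; exact Finset.sum_congr rfl fun A _ => h A
    _ = (1 / 2 ^ K : ℝ)^2 * ∑ t : Fin K → Bool, ∑ r : Fin K → Bool,
          (f (fun i => if t i then 1 else -1) * f (fun i => if r i then 1 else -1)) *
            ∑ A : Finset (Fin K),
              ((∏ i ∈ A, (if t i then (1:ℝ) else -1)) * ∏ i ∈ A, (if r i then (1:ℝ) else -1)) := by
        congr 1
        rw [Finset.sum_comm]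
        refine Finset.sum_congr rfl fun t _ => ?_
        rw [Finset.sum_comm]
        exact Finset.sum_congr rfl fun r _ => (Finset.mul_sum _ _ _).symm
    _ = (1 / 2 ^ K : ℝ)^2 * ∑ t : Fin K → Bool, (2:ℝ)^K := by
        congr 1
        refine Finset.sum_congr rfl fun t _ => ?_
        simp_rw [orth K]
        simp_rw [mul_ite, mul_zero]
        rw [Finset.sum_ite_eq Finset.univ t]
        simp only [Finset.mem_univ, if_pos]
        rcases hbool t with ht | ht <;> rw [ht] <;> ring
    _ = 1 := by
        rw [Finset.sum_const, Finset.card_univ]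
        have : Fintype.card (Fin K → Bool) = 2 ^ K := by simp
        rw [this, nsmul_eq_mul]
        push_cast
        have : (2:ℝ)^K ≠ 0 := by positivity
        field_simp

lemma sum_abs_le (K : ℕ) (f : (Fin K → ℝ) → ℝ)
    (hbool : ∀ s : Fin K → Bool,
      f (fun i => if s i then 1 else -1) = 1 ∨ f (fun i => if s i then 1 else -1) = -1) :
    ∑ A : Finset (Fin K), |boolFourierCoeff K f A| ≤ (2:ℝ) ^ ((K:ℝ)/2) := by
  set L := ∑ A : Finset (Fin K), |boolFourierCoeff K f A| with hL
  set P := (2:ℝ) ^ ((K:ℝ)/2) with hP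
  have hPpos : 0 < P := Real.rpow_pos_of_pos (by norm_num) _
  have hPP : P ^ 2 = (2:ℝ)^K := by
    rw [hP, ← Real.rpow_natCast ((2:ℝ) ^ ((K:ℝ)/2)) 2, ← Real.rpow_mul (by norm_num)]
    rw [show (K:ℝ)/2 * (2:ℕ) = (K:ℝ) by push_cast; ring, Real.rpow_natCast]
  have hL2 : L ^ 2 ≤ (2:ℝ)^K := by
    have := sq_sum_le_card_mul_sum_sq (s := (Finset.univ : Finset (Finset (Fin K))))
      (f := fun A => |boolFourierCoeff K f A|)
    simp_rw [sq_abs] at this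
    rw [parseval K f hbool] at this
    calc L ^ 2 ≤ (Finset.univ : Finset (Finset (Fin K))).card * 1 := by exact_mod_cast this
      _ = (2:ℝ)^K := by
        rw [Finset.card_univ, Fintype.card_finset, Fintype.card_fin]; push_cast; ring
  have hLnn : 0 ≤ L := Finset.sum_nonneg fun A _ => abs_nonneg _
  nlinarith [sq_nonneg (L - P), sq_nonneg (L + P)]

theorem stmt16 (K : ℕ) (hK : 1 ≤ K) (f : (Fin K → ℝ) → ℝ)
    (hbool : ∀ s : Fin K → Bool,
      f (fun i => if s i then 1 else -1) = 1 ∨ f (fun i => if s i then 1 else -1) = -1) :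
    Real.sqrt (∑ A : Finset (Fin K), (2 * boolFourierCoeff K f A) ^ 2) ≤ 2 ∧
    ∀ s : Fin K → Bool, ∀ u : Fin K → ℝ, (∀ i, |u i| ≤ 1) →
      (∀ i, |(if s i then (1 : ℝ) else -1) - u i| ≤ 1 / (K * (2 : ℝ) ^ (((K : ℝ) + 2) / 2))) →
      1 ≤ 2 * mlExt K f u * f (fun i => if s i then 1 else -1) ∧
        2 * mlExt K f u * f (fun i => if s i then 1 else -1) ≤ 3 := by
  constructor
  · have : ∑ A : Finset (Fin K), (2 * boolFourierCoeff K f A) ^ 2 = 4 := by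
      simp_rw [mul_pow]
      rw [← Finset.mul_sum, parseval K f hbool]
      norm_num
    rw [this, show (4:ℝ) = 2^2 by norm_num, Real.sqrt_sq (by norm_num)]
  · intro s u hu hclose
    set x : Fin K → ℝ := fun i => if s i then (1:ℝ) else -1 with hxdef
    have hx1 : ∀ i, |x i| ≤ 1 := by
      intro i; rw [hxdef]; by_cases h : s i <;> simp [h]
    set c : ℝ := f (fun i => if s i then 1 else -1) with hcdef
    have hcc : c * c = 1 := by rcases hbool s with h | h <;> rw [hcdef, h] <;> norm_num
    have hcabs : |c| = 1 := by rcases hbool s with h | h <;> rw [hcdef, h] <;> norm_num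
    set P := (2:ℝ) ^ ((K:ℝ)/2) with hP
    have hPpos : 0 < P := Real.rpow_pos_of_pos (by norm_num) _
    have hKpos : (0:ℝ) < K := by exact_mod_cast hK
    have hbig : (2:ℝ) ^ (((K:ℝ)+2)/2) = 2 * P := by
      rw [hP, show ((K:ℝ)+2)/2 = (K:ℝ)/2 + 1 by ring, Real.rpow_add (by norm_num),
        Real.rpow_one]
      ring
    set ξ := 1 / ((K:ℝ) * (2:ℝ) ^ (((K:ℝ)+2)/2)) with hξ
    have hξnn : 0 ≤ ξ := by
      rw [hξ]; positivity
    have hΔ : |mlExt K f u - mlExt K f x| ≤ 1/2 := by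
      have step1 : |mlExt K f u - mlExt K f x|
          ≤ ∑ A : Finset (Fin K), |boolFourierCoeff K f A| * ((K:ℝ) * ξ) := by
        unfold mlExt
        rw [← Finset.sum_sub_distrib]
        refine (Finset.abs_sum_le_sum_abs _ _).trans (Finset.sum_le_sum fun A _ => ?_)
        rw [← mul_sub, abs_mul]
        refine mul_le_mul_of_nonneg_left ?_ (abs_nonneg _)
        calc |(∏ i ∈ A, u i) - ∏ i ∈ A, x i| ≤ ∑ i ∈ A, |u i - x i| :=
              prod_sub_prod_abs_le A u x hu hx1
          _ ≤ ∑ i ∈ A, ξ := Finset.sum_le_sum fun i _ => by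
              rw [abs_sub_comm]; exact hclose i
          _ = A.card * ξ := by rw [Finset.sum_const, nsmul_eq_mul]
          _ ≤ (K:ℝ) * ξ := by
              refine mul_le_mul_of_nonneg_right ?_ hξnn
              exact_mod_cast (A.card_le_univ.trans_eq (by simp))
      have step2 : ∑ A : Finset (Fin K), |boolFourierCoeff K f A| * ((K:ℝ) * ξ)
          ≤ P * ((K:ℝ) * ξ) := by
        rw [← Finset.sum_mul]
        refine mul_le_mul_of_nonneg_right (sum_abs_le K f hbool) (by positivity)
      have step3 : P * ((K:ℝ) * ξ) = 1/2 := by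
        rw [hξ, hbig]
        field_simp
      linarith
    have hmx : mlExt K f x = c := inversion K f s
    have key : |2 * mlExt K f u * c - 2| ≤ 1 := by
      have e : 2 * mlExt K f u * c - 2 = 2 * (mlExt K f u - mlExt K f x) * c := by
        rw [hmx]; linear_combination 2 * hcc
      rw [e, abs_mul, abs_mul, abs_two, hcabs, mul_one]
      calc 2 * |mlExt K f u - mlExt K f x| ≤ 2 * (1/2) := by linarith
        _ = 1 := by norm_num
    rw [abs_le] at key
    exact ⟨by linarith [key.1], by linarith [key.2]⟩
end

section
/- Let k be odd, d ≥ k, and let w be uniform on W_{d,k} = {w ∈ {−1,0,1}^d : ∑|w_l| = k}. Fix x ∈ {±1}^d and a coordinate j ∈ [d], and set X = w_j · sign(⟨w, x⟩). Then E[X] = α_{d,k} · x_j where α_{d,k} = (k/d)·C(k−1, (k−1)/2)/2^{k−1}, and P(X ≠ 0) = k/d. -/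
open Finset
private def tri3 : Fin 3 → ℤ := ![-1, 0, 1]
private lemma fin3_cases (v : Fin 3) : v = 0 ∨ v = 1 ∨ v = 2 := by
  fin_cases v <;> simp
@[simp] private lemma tri3_zero : tri3 0 = -1 := rfl
@[simp] private lemma tri3_one : tri3 1 = 0 := rfl
@[simp] private lemma tri3_two : tri3 2 = 1 := rfl




private lemma sum_pm {α : Type*} [DecidableEq α] (t : Finset α) (g : α → ℤ)
    (hg : ∀ l ∈ t, g l = 1 ∨ g l = -1) :
    ∑ l ∈ t, g l = 2 * ((t.filter (fun l => g l = 1)).card : ℤ) - t.card := by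
  classical
  have h1 : ∑ l ∈ t.filter (fun l => g l = 1), g l
      = ((t.filter (fun l => g l = 1)).card : ℤ) := by
    rw [Finset.sum_congr rfl (fun l hl => (Finset.mem_filter.mp hl).2)]
    simp
  have h2 : ∑ l ∈ t.filter (fun l => ¬ g l = 1), g l
      = -(((t.filter (fun l => ¬ g l = 1)).card : ℤ)) := by
    have hv : ∀ l ∈ t.filter (fun l => ¬ g l = 1), g l = -1 := by
      intro l hl
      rcases hg l (Finset.mem_filter.mp hl).1 with h | h
      · exact absurd h (Finset.mem_filter.mp hl).2
      · exact h
    rw [Finset.sum_congr rfl hv]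
    simp
  have h3 := Finset.card_filter_add_card_filter_not (s := t) (p := fun l => g l = 1)
  rw [← Finset.sum_filter_add_sum_filter_not t (fun l => g l = 1) g, h1, h2]
  omega

private lemma card_powersetCard_mem {d k : ℕ} (j : Fin d) (hk : 1 ≤ k) :
    (((Finset.univ : Finset (Fin d)).powersetCard k).filter (fun s => j ∈ s)).card
      = Nat.choose (d - 1) (k - 1) := by
  classical
  have hcard : ((Finset.univ : Finset (Fin d)).erase j).card = d - 1 := by
    rw [Finset.card_erase_of_mem (Finset.mem_univ j)]
    simp
  rw [← hcard, ← Finset.card_powersetCard]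
  refine Finset.card_bij' (fun s _ => s.erase j) (fun u _ => insert j u) ?_ ?_ ?_ ?_
  · intro s hs
    simp only [Finset.mem_filter, Finset.mem_powersetCard] at hs
    rw [Finset.mem_powersetCard]
    constructor
    · exact Finset.erase_subset_erase j hs.1.1
    · rw [Finset.card_erase_of_mem hs.2, hs.1.2]
  · intro u hu
    rw [Finset.mem_powersetCard] at hu
    have hju : j ∉ u := fun h => (Finset.mem_erase.mp (hu.1 h)).1 rfl
    simp only [Finset.mem_filter, Finset.mem_powersetCard]
    refine ⟨⟨Finset.subset_univ _, ?_⟩, Finset.mem_insert_self j u⟩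
    rw [Finset.card_insert_of_notMem hju, hu.2]
    omega
  · intro s hs
    simp only [Finset.mem_filter] at hs
    exact Finset.insert_erase hs.2
  · intro u hu
    rw [Finset.mem_powersetCard] at hu
    have hju : j ∉ u := fun h => (Finset.mem_erase.mp (hu.1 h)).1 rfl
    exact Finset.erase_insert hju

private def Ws (d : ℕ) (s : Finset (Fin d)) : Finset (Fin d → Fin 3) :=
  Finset.univ.filter (fun w => ∀ l, w l = 1 ↔ l ∉ s)

private lemma mem_Ws {d : ℕ} {s : Finset (Fin d)} {w : Fin d → Fin 3} :
    w ∈ Ws d s ↔ ∀ l, w l = 1 ↔ l ∉ s := by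
  simp [Ws]

private lemma card_Ws (d : ℕ) (s : Finset (Fin d)) : (Ws d s).card = 2 ^ s.card := by
  classical
  rw [← Finset.card_powerset, eq_comm]
  refine Finset.card_bij' (fun u _ => fun l => if l ∈ u then 2 else if l ∈ s then 0 else 1)
    (fun w _ => s.filter (fun l => w l = 2)) ?_ ?_ ?_ ?_
  · intro u hu
    rw [Finset.mem_powerset] at hu
    rw [mem_Ws]
    intro l
    by_cases h1 : l ∈ u
    · simp [h1, hu h1]
    · by_cases h2 : l ∈ s <;> simp [h1, h2]
  · intro w _
    rw [Finset.mem_powerset]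
    exact Finset.filter_subset _ _
  · intro u hu
    rw [Finset.mem_powerset] at hu
    ext l
    simp only [Finset.mem_filter]
    constructor
    · rintro ⟨hls, hl2⟩
      by_cases h1 : l ∈ u
      · exact h1
      · exfalso
        simp [h1, hls] at hl2
    · intro h1
      exact ⟨hu h1, by simp [h1]⟩
  · intro w hw
    rw [mem_Ws] at hw
    funext l
    by_cases h2 : l ∈ s.filter (fun l => w l = 2)
    · simp only [h2, if_pos]
      exact ((Finset.mem_filter.mp h2).2).symm
    · simp only [h2, if_neg]
      by_cases hs : l ∈ s
      · have hw1 : w l ≠ 1 := fun h => (hw l).mp h hs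
        have hw2 : w l ≠ 2 := fun h => h2 (Finset.mem_filter.mpr ⟨hs, h⟩)
        rcases fin3_cases (w l) with h | h | h
        · simp [hs, h]
        · exact absurd h hw1
        · exact absurd h hw2
      · simp [hs, ((hw l).mpr hs).symm]

open Classical in
private noncomputable def psiW {d : ℕ} (s u : Finset (Fin d)) (j : Fin d) (xi : Fin d → ℤ) :
    Fin d → Fin 3 :=
  fun l => if l ∈ s then (if l = j then 2 else if ((l ∈ u) ↔ (xi l = 1)) then 2 else 0) else 1

open Classical in
private lemma psi_term {d : ℕ} (s u : Finset (Fin d)) (j : Fin d) (xi : Fin d → ℤ)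
    (hxi : ∀ l, xi l = 1 ∨ xi l = -1) {l : Fin d} (hl : l ∈ s.erase j) :
    tri3 (psiW s u j xi l) * xi l = 1 ↔ l ∈ u := by
  obtain ⟨hlj, hls⟩ := Finset.mem_erase.mp hl
  rcases hxi l with h | h <;> by_cases hu : l ∈ u <;>
    simp [psiW, hls, hlj, hu, h] <;> norm_num

open Classical in
private lemma card_Ns {d k m : ℕ} (s : Finset (Fin d)) (hs : s.card = k) (j : Fin d)
    (hj : j ∈ s) (xi : Fin d → ℤ) (hxi : ∀ l, xi l = 1 ∨ xi l = -1)
    (hm : k - 1 = 2 * m) (hk : 1 ≤ k) :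
    ((Ws d s).filter (fun w => w j = 2 ∧ ∑ l ∈ s.erase j, tri3 (w l) * xi l = 0)).card
      = Nat.choose (k - 1) m := by
  have hec : (s.erase j).card = k - 1 := by rw [Finset.card_erase_of_mem hj, hs]
  rw [← hec, ← Finset.card_powersetCard]
  have hterm : ∀ w ∈ Ws d s, ∀ l ∈ s.erase j, tri3 (w l) * xi l = 1 ∨ tri3 (w l) * xi l = -1 := by
    intro w hw l hl
    obtain ⟨hlj, hls⟩ := Finset.mem_erase.mp hl
    have hw1 : w l ≠ 1 := fun h => (mem_Ws.mp hw l).mp h hls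
    rcases fin3_cases (w l) with h | h | h <;> rcases hxi l with h' | h' <;>
      simp [h, h'] at hw1 ⊢
  refine Finset.card_bij' (fun w _ => (s.erase j).filter (fun l => tri3 (w l) * xi l = 1))
    (fun u _ => psiW s u j xi) ?_ ?_ ?_ ?_
  · intro w hw
    rw [Finset.mem_filter] at hw
    obtain ⟨hwW, hwj, hbal⟩ := hw
    rw [Finset.mem_powersetCard]
    refine ⟨Finset.filter_subset _ _, ?_⟩
    have h5 := sum_pm (s.erase j) (fun l => tri3 (w l) * xi l) (hterm w hwW)
    rw [hbal, hec] at h5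
    clear hbal hterm hxi
    beta_reduce at h5 ⊢
    omega
  · intro u hu
    rw [Finset.mem_powersetCard] at hu
    obtain ⟨hus, huc⟩ := hu
    have hpsiW : psiW s u j xi ∈ Ws d s := by
      rw [mem_Ws]
      intro l
      by_cases hls : l ∈ s
      · simp only [psiW, hls, if_pos]
        constructor
        · intro h
          by_cases hlj : l = j
          · simp [hlj] at h
          · by_cases hc : (l ∈ u) ↔ (xi l = 1) <;> simp [hlj, hc] at h
        · intro h; exact absurd trivial h
      · simp [psiW, hls]
    refine Finset.mem_filter.mpr ⟨hpsiW, ?_, ?_⟩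
    · simp [psiW, hj]
    · have hfil : (s.erase j).filter (fun l => tri3 (psiW s u j xi l) * xi l = 1) = u := by
        ext l
        simp only [Finset.mem_filter]
        constructor
        · rintro ⟨hl, h⟩; exact (psi_term s u j xi hxi hl).mp h
        · intro hl
          have hle : l ∈ s.erase j := hus hl
          exact ⟨hle, (psi_term s u j xi hxi hle).mpr hl⟩
      have := sum_pm (s.erase j) (fun l => tri3 (psiW s u j xi l) * xi l)
        (hterm _ hpsiW)
      rw [hfil, huc, hec] at this
      rw [this]
      push_cast
      omega
  · intro w hw
    rw [Finset.mem_filter] at hw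
    obtain ⟨hwW, hwj, -⟩ := hw
    funext l
    by_cases hls : l ∈ s
    · by_cases hlj : l = j
      · subst hlj; simp [psiW, hls, hwj]
      · have hle : l ∈ s.erase j := Finset.mem_erase.mpr ⟨hlj, hls⟩
        have hw1 : w l ≠ 1 := fun h => (mem_Ws.mp hwW l).mp h hls
        have hmem : l ∈ (s.erase j).filter (fun l => tri3 (w l) * xi l = 1)
            ↔ tri3 (w l) * xi l = 1 := by simp [Finset.mem_filter, hle]
        rcases fin3_cases (w l) with h | h | h
        · rcases hxi l with h' | h' <;>
            simp [psiW, hls, hlj, hmem, h, h'] <;> norm_num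
        · exact absurd h hw1
        · rcases hxi l with h' | h' <;>
            simp [psiW, hls, hlj, hmem, h, h']
    · simp [psiW, hls, ((mem_Ws.mp hwW l).mpr hls).symm]
  · intro u hu
    rw [Finset.mem_powersetCard] at hu
    ext l
    simp only [Finset.mem_filter]
    constructor
    · rintro ⟨hl, h⟩; exact (psi_term s u j xi hxi hl).mp h
    · intro hl
      have hle : l ∈ s.erase j := hu.1 hl
      exact ⟨hle, (psi_term s u j xi hxi hle).mpr hl⟩


open Classical in
theorem stmt17 (d k : ℕ) (hk : Odd k) (hk1 : 1 ≤ k) (hkd : k ≤ d)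
    (x : Fin d → ℝ) (hx : ∀ l, x l = 1 ∨ x l = -1) (j : Fin d) :
    let tri : Fin 3 → ℤ := ![-1, 0, 1]
    let W : Finset (Fin d → Fin 3) :=
      Finset.univ.filter (fun w => ∑ l, (tri (w l)).natAbs = k)
    let α : ℝ := ((k : ℝ) / d) * (Nat.choose (k - 1) ((k - 1) / 2)) / 2 ^ (k - 1)
    (1 / (W.card : ℝ)) *
        ∑ w ∈ W, (tri (w j) : ℝ) * Real.sign (∑ l, (tri (w l) : ℝ) * x l) = α * x j
    ∧ ((W.filter (fun w =>
          (tri (w j) : ℝ) * Real.sign (∑ l, (tri (w l) : ℝ) * x l) ≠ 0)).card : ℝ) /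
        (W.card : ℝ) = (k : ℝ) / d := by
  intro tri W α
  classical
  have hd1 : 1 ≤ d := le_trans hk1 hkd
  obtain ⟨m, hm⟩ : ∃ m, k - 1 = 2 * m := by
    obtain ⟨t, ht⟩ := hk; exact ⟨t, by omega⟩
  set xi : Fin d → ℤ := fun l => if x l = 1 then 1 else -1 with hxidef
  have hxi : ∀ l, xi l = 1 ∨ xi l = -1 := by
    intro l; by_cases h : x l = 1 <;> simp [hxidef, h]
  have hxx : ∀ l, x l = (xi l : ℝ) := by
    intro l; rcases hx l with h | h <;> simp [hxidef, h] <;> norm_num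
  have htri : ∀ v, tri v = tri3 v := fun v => rfl
  -- membership in W via support cardinality
  have memW : ∀ w : Fin d → Fin 3,
      w ∈ W ↔ (Finset.univ.filter (fun l => w l ≠ 1)).card = k := by
    intro w
    have he : ∀ l : Fin d, (tri (w l)).natAbs = if w l ≠ 1 then 1 else 0 := by
      intro l
      rw [htri]
      rcases fin3_cases (w l) with h | h | h <;> simp [h, tri3]
    have hsum : ∑ l, (tri (w l)).natAbs = (Finset.univ.filter (fun l => w l ≠ 1)).card := by
      rw [Finset.sum_congr rfl (fun l _ => he l), ← Finset.card_filter]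
    simp only [W, Finset.mem_filter, Finset.mem_univ, true_and]
    rw [hsum]
  -- W as disjoint union over supports
  have hsupp : ∀ (s : Finset (Fin d)) (w : Fin d → Fin 3), w ∈ Ws d s →
      Finset.univ.filter (fun l => w l ≠ 1) = s := by
    intro s w hw
    ext l
    simp only [Finset.mem_filter, Finset.mem_univ, true_and]
    have h := mem_Ws.mp hw l
    constructor
    · intro h1
      by_contra hns
      exact h1 (h.mpr hns)
    · intro hls h1
      exact (h.mp h1) hls
  have hWb : W = ((Finset.univ : Finset (Fin d)).powersetCard k).biUnion (fun s => Ws d s) := by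
    ext w
    rw [memW, Finset.mem_biUnion]
    constructor
    · intro h
      refine ⟨Finset.univ.filter (fun l => w l ≠ 1), ?_, ?_⟩
      · rw [Finset.mem_powersetCard]; exact ⟨Finset.subset_univ _, h⟩
      · rw [mem_Ws]; intro l; simp
    · rintro ⟨s, hs, hws⟩
      rw [hsupp s w hws]
      exact (Finset.mem_powersetCard.mp hs).2
  have hdisj : ∀ s ∈ (Finset.univ : Finset (Fin d)).powersetCard k,
      ∀ s' ∈ (Finset.univ : Finset (Fin d)).powersetCard k,
      s ≠ s' → Disjoint (Ws d s) (Ws d s') := by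
    intro s _ s' _ hne
    rw [Finset.disjoint_left]
    intro w hws hws'
    exact hne ((hsupp s w hws).symm.trans (hsupp s' w hws'))
  have cardW : W.card = Nat.choose d k * 2 ^ k := by
    rw [hWb, Finset.card_biUnion hdisj]
    have hc : ∀ s ∈ (Finset.univ : Finset (Fin d)).powersetCard k, (Ws d s).card = 2 ^ k := by
      intro s hs
      rw [card_Ws, (Finset.mem_powersetCard.mp hs).2]
    rw [Finset.sum_congr rfl hc, Finset.sum_const, Finset.card_powersetCard,
      Finset.card_univ, Fintype.card_fin, smul_eq_mul]
  -- inner product as integer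
  have hip : ∀ w : Fin d → Fin 3,
      (∑ l, (tri (w l) : ℝ) * x l) = ((∑ l, tri3 (w l) * xi l : ℤ) : ℝ) := by
    intro w
    push_cast
    refine Finset.sum_congr rfl fun l _ => ?_
    rw [hxx l, htri]
  -- restriction of the integer inner product to the support
  have hres : ∀ w : Fin d → Fin 3, (∑ l, tri3 (w l) * xi l)
      = ∑ l ∈ Finset.univ.filter (fun l => w l ≠ 1), tri3 (w l) * xi l := by
    intro w
    rw [eq_comm]
    apply Finset.sum_subset (Finset.filter_subset _ _)
    intro l _ hl
    have h1 : w l = 1 := by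
      by_contra h
      exact hl (Finset.mem_filter.mpr ⟨Finset.mem_univ l, h⟩)
    simp [h1]
  have hterm : ∀ w : Fin d → Fin 3, ∀ l ∈ Finset.univ.filter (fun l => w l ≠ 1),
      tri3 (w l) * xi l = 1 ∨ tri3 (w l) * xi l = -1 := by
    intro w l hl
    have h1 : w l ≠ 1 := (Finset.mem_filter.mp hl).2
    rcases fin3_cases (w l) with h | h | h
    · rcases hxi l with h' | h' <;> simp [h, h']
    · exact absurd h h1
    · rcases hxi l with h' | h' <;> simp [h, h']
  have hTodd : ∀ w ∈ W, (∑ l, tri3 (w l) * xi l) ≠ 0 := by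
    intro w hw
    have hk' := (memW w).mp hw
    have h5 := sum_pm (Finset.univ.filter (fun l => w l ≠ 1))
      (fun l => tri3 (w l) * xi l) (hterm w)
    rw [hres w, h5, hk']
    obtain ⟨t, ht⟩ := hk
    intro heq
    omega
  -- choose identity
  have hdchoose : d * Nat.choose (d-1) (k-1) = k * Nat.choose d k := by
    have h := Nat.add_one_mul_choose_eq (d-1) (k-1)
    have e1 : d-1+1 = d := by omega
    have e2 : k-1+1 = k := by omega
    rw [e1, e2] at h
    exact h.trans (Nat.mul_comm _ _)
  have hCdk : (0:ℝ) < (Nat.choose d k : ℝ) := by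
    exact_mod_cast Nat.choose_pos hkd
  have hm2 : (k - 1) / 2 = m := by omega
  have hC : (d:ℝ) * (Nat.choose (d-1) (k-1) : ℝ) = (k:ℝ) * (Nat.choose d k : ℝ) := by
    exact_mod_cast hdchoose
  have h2pow : (2:ℝ) ^ k = 2 * 2 ^ (k - 1) := by
    have e : k - 1 + 1 = k := by omega
    conv_lhs => rw [← e]
    rw [pow_succ]
    ring
  have hdR0 : (d:ℝ) ≠ 0 := by
    have : (0:ℝ) < (d:ℝ) := by exact_mod_cast le_trans hk1 hkd
    exact ne_of_gt this
  have hC1 : ((Nat.choose (d-1) (k-1) : ℕ) : ℝ)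
      = (k:ℝ) * (Nat.choose d k : ℝ) / d := by
    field_simp
    linear_combination hC
  have h2k : (0:ℝ) < (2:ℝ)^k := by positivity
  have hdR : (0:ℝ) < (d:ℝ) := by exact_mod_cast hd1
  constructor
  · -- first part
    set F : (Fin d → Fin 3) → ℝ :=
      fun w => (tri (w j) : ℝ) * Real.sign (∑ l, (tri (w l) : ℝ) * x l) with hF
    have hF1 : ∀ w : Fin d → Fin 3, w j = 1 → F w = 0 := by
      intro w h
      have h0 : ((tri (w j) : ℤ) : ℝ) = 0 := by rw [h, htri]; simp
      rw [hF]
      simp only []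
      rw [h0, zero_mul]
    -- update membership
    have hupd_mem : ∀ (w : Fin d → Fin 3) (b : Fin 3), w j ≠ 1 → b ≠ 1 → w ∈ W →
        Function.update w j b ∈ W := by
      intro w b ha hb hw
      rw [memW] at hw ⊢
      rw [← hw]
      congr 1
      apply Finset.filter_congr
      intro l _
      by_cases hl : l = j
      · subst hl
        simp only [Function.update_self]
        simp [ha, hb]
      · simp only [Function.update_of_ne hl]
    have hsplit : ∑ w ∈ W, F w =
        ∑ w ∈ W.filter (fun w => w j = 2), F w
          + ∑ w ∈ W.filter (fun w => w j = 0), F w := by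
      rw [← Finset.sum_filter_add_sum_filter_not W (fun w => w j = 2) F]
      congr 1
      rw [← Finset.sum_filter_add_sum_filter_not (W.filter (fun w => ¬ w j = 2))
        (fun w => w j = 0) F]
      have e1 : (W.filter (fun w => ¬ w j = 2)).filter (fun w => w j = 0)
          = W.filter (fun w => w j = 0) := by
        rw [Finset.filter_filter]
        apply Finset.filter_congr
        intro w _
        constructor
        · exact fun h => h.2
        · intro h
          refine ⟨?_, h⟩
          rw [h]
          decide
      have e2 : ∑ w ∈ (W.filter (fun w => ¬ w j = 2)).filter (fun w => ¬ w j = 0),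
          F w = 0 := by
        apply Finset.sum_eq_zero
        intro w hw
        rw [Finset.mem_filter, Finset.mem_filter] at hw
        obtain ⟨⟨-, h2⟩, h0⟩ := hw
        rcases fin3_cases (w j) with h | h | h
        · exact absurd h h0
        · exact hF1 w h
        · exact absurd h h2
      rw [e1, e2, add_zero]
    have hsum0 : ∑ w ∈ W.filter (fun w => w j = 0), F w
        = ∑ w ∈ W.filter (fun w => w j = 2), F (Function.update w j 0) := by
      refine Finset.sum_bij' (fun w _ => Function.update w j 2)
        (fun w _ => Function.update w j 0) ?_ ?_ ?_ ?_ ?_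
      · intro w hw
        obtain ⟨hwW, hwj⟩ := Finset.mem_filter.mp hw
        refine Finset.mem_filter.mpr ⟨?_, Function.update_self _ _ _⟩
        exact hupd_mem w 2 (by rw [hwj]; decide) (by decide) hwW
      · intro w hw
        obtain ⟨hwW, hwj⟩ := Finset.mem_filter.mp hw
        refine Finset.mem_filter.mpr ⟨?_, Function.update_self _ _ _⟩
        exact hupd_mem w 0 (by rw [hwj]; decide) (by decide) hwW
      · intro w hw
        obtain ⟨-, hwj⟩ := Finset.mem_filter.mp hw
        beta_reduce
        funext l
        by_cases hl : l = j
        · subst hl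
          rw [Function.update_self, hwj]
        · rw [Function.update_of_ne hl, Function.update_of_ne hl]
      · intro w hw
        obtain ⟨-, hwj⟩ := Finset.mem_filter.mp hw
        beta_reduce
        funext l
        by_cases hl : l = j
        · subst hl
          rw [Function.update_self, hwj]
        · rw [Function.update_of_ne hl, Function.update_of_ne hl]
      · intro w hw
        obtain ⟨-, hwj⟩ := Finset.mem_filter.mp hw
        beta_reduce
        refine congrArg F (funext fun l => ?_)
        by_cases hl : l = j
        · subst hl
          simp [hwj]
        · rw [Function.update_of_ne hl, Function.update_of_ne hl]
    have hpoint : ∀ w ∈ W.filter (fun w => w j = 2),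
        F w + F (Function.update w j 0)
          = if (∑ l ∈ (Finset.univ.filter (fun l => w l ≠ 1)).erase j,
              tri3 (w l) * xi l) = 0 then 2 * x j else 0 := by
      intro w hw
      obtain ⟨hwW, hwj⟩ := Finset.mem_filter.mp hw
      have hjt : j ∈ Finset.univ.filter (fun l => w l ≠ 1) :=
        Finset.mem_filter.mpr ⟨Finset.mem_univ j, by rw [hwj]; decide⟩
      have hw'W : Function.update w j 0 ∈ W :=
        hupd_mem w 0 (by rw [hwj]; decide) (by decide) hwW
      have hteq : Finset.univ.filter (fun l => Function.update w j 0 l ≠ 1)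
          = Finset.univ.filter (fun l => w l ≠ 1) := by
        apply Finset.filter_congr
        intro l _
        by_cases hl : l = j
        · subst hl
          simp only [Function.update_self]
          rw [hwj]
          constructor <;> intro <;> decide
        · simp only [Function.update_of_ne hl]
      have hTw : (∑ l, tri3 (w l) * xi l)
          = xi j + ∑ l ∈ (Finset.univ.filter (fun l => w l ≠ 1)).erase j,
              tri3 (w l) * xi l := by
        rw [hres w, ← Finset.add_sum_erase _ _ hjt, hwj]
        simp
      have hTw' : (∑ l, tri3 ((Function.update w j 0) l) * xi l)
          = -xi j + ∑ l ∈ (Finset.univ.filter (fun l => w l ≠ 1)).erase j,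
              tri3 (w l) * xi l := by
        rw [hres _, hteq, ← Finset.add_sum_erase _ _ hjt]
        congr 1
        · rw [Function.update_self]
          simp
        · apply Finset.sum_congr rfl
          intro l hl
          rw [Function.update_of_ne (Finset.mem_erase.mp hl).1]
      have hFw : F w = Real.sign (((xi j + ∑ l ∈ (Finset.univ.filter
          (fun l => w l ≠ 1)).erase j, tri3 (w l) * xi l : ℤ)) : ℝ) := by
        rw [hF]
        simp only []
        rw [hip w, hTw, hwj, htri]
        simp
      have hFw' : F (Function.update w j 0) = - Real.sign (((-xi j
          + ∑ l ∈ (Finset.univ.filter (fun l => w l ≠ 1)).erase j,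
            tri3 (w l) * xi l : ℤ)) : ℝ) := by
        rw [hF]
        simp only []
        rw [hip _, hTw', Function.update_self, htri]
        simp
      set S := ∑ l ∈ (Finset.univ.filter (fun l => w l ≠ 1)).erase j,
        tri3 (w l) * xi l with hSdef
      rw [hFw, hFw']
      have hcard_t : (Finset.univ.filter (fun l => w l ≠ 1)).card = k := (memW w).mp hwW
      have hcard_e : ((Finset.univ.filter (fun l => w l ≠ 1)).erase j).card = k - 1 := by
        rw [Finset.card_erase_of_mem hjt, hcard_t]
      have hSpar := sum_pm ((Finset.univ.filter (fun l => w l ≠ 1)).erase j)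
        (fun l => tri3 (w l) * xi l)
        (fun l hl => hterm w l (Finset.mem_erase.mp hl).2)
      beta_reduce at hSpar
      rw [← hSdef, hcard_e] at hSpar
      by_cases hS0 : S = 0
      · rw [if_pos hS0, hS0]
        have s1 : Real.sign ((1:ℝ)) = 1 := Real.sign_one
        have s2 : Real.sign ((-1:ℝ)) = -1 := by
          rw [Real.sign_of_neg] ; norm_num
        rcases hxi j with h | h <;> rw [hxx j, h] <;> push_cast <;> norm_num <;>
          rw [s2] <;> norm_num
      · rw [if_neg hS0]
        have h2 : 2 ≤ S ∨ S ≤ -2 := by omega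
        have hxj2 : xi j = 1 ∨ xi j = -1 := hxi j
        rcases h2 with h2 | h2
        · have p1 : (0:ℝ) < ((xi j + S : ℤ) : ℝ) := by
            have : (0:ℤ) < xi j + S := by omega
            exact_mod_cast this
          have p2 : (0:ℝ) < ((-xi j + S : ℤ) : ℝ) := by
            have : (0:ℤ) < -xi j + S := by omega
            exact_mod_cast this
          rw [Real.sign_of_pos p1, Real.sign_of_pos p2]
          ring
        · have p1 : ((xi j + S : ℤ) : ℝ) < 0 := by
            have : (xi j + S : ℤ) < 0 := by omega
            exact_mod_cast this
          have p2 : ((-xi j + S : ℤ) : ℝ) < 0 := by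
            have : (-xi j + S : ℤ) < 0 := by omega
            exact_mod_cast this
          rw [Real.sign_of_neg p1, Real.sign_of_neg p2]
          ring
    have hNb : (W.filter (fun w => w j = 2)).filter
          (fun w => (∑ l ∈ (Finset.univ.filter (fun l => w l ≠ 1)).erase j,
            tri3 (w l) * xi l) = 0)
        = (((Finset.univ : Finset (Fin d)).powersetCard k).filter (fun s => j ∈ s)).biUnion
          (fun s => (Ws d s).filter
            (fun w => w j = 2 ∧ ∑ l ∈ s.erase j, tri3 (w l) * xi l = 0)) := by
      ext w
      rw [Finset.mem_filter, Finset.mem_filter, Finset.mem_biUnion]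
      constructor
      · rintro ⟨⟨hwW, hwj⟩, hbal⟩
        refine ⟨Finset.univ.filter (fun l => w l ≠ 1), ?_, ?_⟩
        · refine Finset.mem_filter.mpr ⟨?_, ?_⟩
          · rw [Finset.mem_powersetCard]
            exact ⟨Finset.subset_univ _, (memW w).mp hwW⟩
          · exact Finset.mem_filter.mpr ⟨Finset.mem_univ j, by rw [hwj]; decide⟩
        · refine Finset.mem_filter.mpr ⟨?_, hwj, hbal⟩
          rw [mem_Ws]
          intro l
          simp
      · rintro ⟨s, hs, hws⟩
        rw [Finset.mem_filter] at hws
        obtain ⟨hwsW, hwj, hbal⟩ := hws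
        have he := hsupp s w hwsW
        rw [Finset.mem_filter, Finset.mem_powersetCard] at hs
        refine ⟨⟨?_, hwj⟩, ?_⟩
        · rw [memW, he]
          exact hs.1.2
        · rw [he]
          exact hbal
    have hNcard : ((W.filter (fun w => w j = 2)).filter
          (fun w => (∑ l ∈ (Finset.univ.filter (fun l => w l ≠ 1)).erase j,
            tri3 (w l) * xi l) = 0)).card
        = Nat.choose (d-1) (k-1) * Nat.choose (k-1) m := by
      rw [hNb, Finset.card_biUnion (fun s hs s' hs' hne =>
        Finset.disjoint_filter_filter
          (hdisj s (Finset.mem_filter.mp hs).1 s' (Finset.mem_filter.mp hs').1 hne))]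
      have hc : ∀ s ∈ ((Finset.univ : Finset (Fin d)).powersetCard k).filter
          (fun s => j ∈ s),
          ((Ws d s).filter (fun w => w j = 2
            ∧ ∑ l ∈ s.erase j, tri3 (w l) * xi l = 0)).card = Nat.choose (k-1) m := by
        intro s hs
        rw [Finset.mem_filter, Finset.mem_powersetCard] at hs
        exact card_Ns s hs.1.2 j hs.2 xi hxi hm hk1
      rw [Finset.sum_congr rfl hc, Finset.sum_const, card_powersetCard_mem j hk1,
        smul_eq_mul]
    rw [hsplit, hsum0, ← Finset.sum_add_distrib,
      Finset.sum_congr rfl hpoint, ← Finset.sum_filter, Finset.sum_const, hNcard,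
      nsmul_eq_mul, cardW]
    show _ = ((k : ℝ) / d) * (Nat.choose (k - 1) ((k - 1) / 2)) / 2 ^ (k - 1) * x j
    rw [hm2]
    push_cast
    rw [hC1, h2pow]
    field_simp

  · -- second part
    have hfeq : W.filter (fun w =>
          (tri (w j) : ℝ) * Real.sign (∑ l, (tri (w l) : ℝ) * x l) ≠ 0)
        = W.filter (fun w => w j ≠ 1) := by
      have ht0 : ∀ v : Fin 3, ((tri v : ℤ) : ℝ) = 0 ↔ v = 1 := by
        intro v
        rw [htri v, Int.cast_eq_zero]
        rcases fin3_cases v with h | h | h <;> subst h <;> simp [tri3] <;> norm_num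
      apply Finset.filter_congr
      intro w hw
      have hne : ((∑ l, tri3 (w l) * xi l : ℤ) : ℝ) ≠ 0 := by
        exact_mod_cast hTodd w hw
      rw [hip w, mul_ne_zero_iff]
      constructor
      · rintro ⟨h1, -⟩
        exact fun hj1 => h1 ((ht0 (w j)).mpr hj1)
      · intro h1
        refine ⟨fun h0 => h1 ((ht0 (w j)).mp h0), ?_⟩
        exact fun h0 => hne (Real.sign_eq_zero_iff.mp h0)
    have hW'b : W.filter (fun w => w j ≠ 1)
        = (((Finset.univ : Finset (Fin d)).powersetCard k).filter (fun s => j ∈ s)).biUnion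
            (fun s => Ws d s) := by
      ext w
      rw [Finset.mem_filter, Finset.mem_biUnion]
      constructor
      · rintro ⟨hwW, hwj⟩
        refine ⟨Finset.univ.filter (fun l => w l ≠ 1), ?_, ?_⟩
        · rw [Finset.mem_filter, Finset.mem_powersetCard]
          refine ⟨⟨Finset.subset_univ _, (memW w).mp hwW⟩, ?_⟩
          exact Finset.mem_filter.mpr ⟨Finset.mem_univ j, hwj⟩
        · rw [mem_Ws]; intro l; simp
      · rintro ⟨s, hs, hws⟩
        rw [Finset.mem_filter, Finset.mem_powersetCard] at hs
        constructor
        · rw [memW, hsupp s w hws]; exact hs.1.2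
        · intro hj1
          exact ((mem_Ws.mp hws j).mp hj1) hs.2
    have hcard2 : (W.filter (fun w => w j ≠ 1)).card = Nat.choose (d-1) (k-1) * 2 ^ k := by
      rw [hW'b, Finset.card_biUnion (fun s hs s' hs' hne =>
        hdisj s (Finset.mem_filter.mp hs).1 s' (Finset.mem_filter.mp hs').1 hne)]
      have hc : ∀ s ∈ ((Finset.univ : Finset (Fin d)).powersetCard k).filter (fun s => j ∈ s),
          (Ws d s).card = 2 ^ k := by
        intro s hs
        rw [card_Ws, (Finset.mem_powersetCard.mp (Finset.mem_filter.mp hs).1).2]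
      rw [Finset.sum_congr rfl hc, Finset.sum_const, card_powersetCard_mem j hk1, smul_eq_mul]
    rw [hfeq, hcard2, cardW]
    push_cast
    rw [div_eq_div_iff (by positivity) (ne_of_gt hdR)]
    have hC : (d:ℝ) * (Nat.choose (d-1) (k-1) : ℝ) = (k:ℝ) * (Nat.choose d k : ℝ) := by
      exact_mod_cast hdchoose
    linear_combination (2:ℝ)^k * hC
end
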